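/- arXiv:cond-mat/0209622 — 5 statements merged into one kernel-verified Lean document; each statement's English description precedes it below -/
import Mathlib

section
/- Fix integers k ≥ 2 and n ≥ k, and let σ, τ ∈ {0,1}^n be truth assignments that assign the same value to exactly z of the n variables. Then the number of k-clauses c ∈ C_k(n) that are NAE-satisfied by both σ and τ equals |C_k(n)| · (1 − 2^{1−k}·(2 − (binom(z,k) + binom(n−z,k))/binom(n,k))), and this is at most |C_k(n)| · f(z/n), where f(α) = 1 − 2^{1−k}·(2 − α^k − (1−α)^k). -/
open scoped Classical

/-- A `k`-clause over `n` Boolean variables: a partial assignment of signs to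
exactly `k` distinct variables (the literal on variable `i` with sign `b` is
made true by `σ` iff `σ i = b`). There are `2^k * (n choose k)` such clauses. -/
abbrev Clause (n k : ℕ) : Type :=
  {c : Fin n → Option Bool // (Finset.univ.filter fun i => (c i).isSome).card = k}

/-- `σ` satisfies the clause `c`: some literal of `c` is made true by `σ`. -/
def SatC {n k : ℕ} (σ : Fin n → Bool) (c : Clause n k) : Prop :=
  ∃ i, c.1 i = some (σ i)

/-- `σ` NAE-satisfies the clause `c`: some literal of `c` is made true by `σ`
and some literal of `c` is made false by `σ`. -/
def NAESatC {n k : ℕ} (σ : Fin n → Bool) (c : Clause n k) : Prop :=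
  (∃ i, c.1 i = some (σ i)) ∧ ∃ i, c.1 i = some (!σ i)

/-- A formula (an `m`-tuple of clauses) is satisfiable. -/
def SatFormula {n k m : ℕ} (F : Fin m → Clause n k) : Prop :=
  ∃ σ : Fin n → Bool, ∀ j, SatC σ (F j)

/-- A formula (an `m`-tuple of clauses) is NAE-satisfiable. -/
def NAESatFormula {n k m : ℕ} (F : Fin m → Clause n k) : Prop :=
  ∃ σ : Fin n → Bool, ∀ j, NAESatC σ (F j)

/-- Probability that the random formula `F_k(n,m)` is satisfiable: the fraction
of `m`-tuples of clauses that are satisfiable. -/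
noncomputable def probSat (k n m : ℕ) : ℝ :=
  ((Finset.univ.filter fun F : Fin m → Clause n k => SatFormula F).card : ℝ) /
    (Fintype.card (Fin m → Clause n k) : ℝ)

/-- Probability that the random formula `F_k(n,m)` is NAE-satisfiable. -/
noncomputable def probNAESat (k n m : ℕ) : ℝ :=
  ((Finset.univ.filter fun F : Fin m → Clause n k => NAESatFormula F).card : ℝ) /
    (Fintype.card (Fin m → Clause n k) : ℝ)

/-- The pair-correlation function `f(α) = 1 - 2^(1-k) (2 - α^k - (1-α)^k)`. -/
noncomputable def fPair (k : ℕ) (α : ℝ) : ℝ :=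
  1 - (2 : ℝ) ^ (1 - (k : ℤ)) * (2 - α ^ k - (1 - α) ^ k)

namespace NAEAux

variable {n k : ℕ}

def clauseOf (s : Finset (Fin n)) (ρ : Fin n → Bool) : Fin n → Option Bool :=
  fun i => if i ∈ s then some (ρ i) else none

lemma support_clauseOf (s : Finset (Fin n)) (ρ : Fin n → Bool) :
    (Finset.univ.filter fun i => ((clauseOf s ρ) i).isSome) = s := by
  ext i
  simp only [Finset.mem_filter, Finset.mem_univ, true_and, clauseOf]
  by_cases h : i ∈ s <;> simp [h]

lemma clauseOf_congr {s : Finset (Fin n)} {ρ ρ' : Fin n → Bool}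
    (h : ∀ i ∈ s, ρ i = ρ' i) : clauseOf s ρ = clauseOf s ρ' := by
  funext i
  unfold clauseOf
  by_cases hi : i ∈ s
  · simp [hi, h i hi]
  · simp [hi]

lemma not_nae_iff (σ : Fin n → Bool) (c : Clause n k) :
    ¬ NAESatC σ c ↔ ∃ ε : Bool,
      c.1 = clauseOf (Finset.univ.filter fun i => (c.1 i).isSome) (fun i => ε ^^ σ i) := by
  constructor
  · intro h
    rw [NAESatC, not_and_or] at h
    rcases h with h | h
    · push_neg at h
      refine ⟨true, funext fun i => ?_⟩
      by_cases hi : (c.1 i).isSome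
      · obtain ⟨b, hb⟩ := Option.isSome_iff_exists.mp hi
        have hne : b ≠ σ i := fun hb' => h i (hb' ▸ hb)
        have : b = !σ i := by revert hne; cases b <;> cases σ i <;> simp
        simp [clauseOf, hb, this, Finset.mem_filter, hi]
      · have : c.1 i = none := Option.not_isSome_iff_eq_none.mp hi
        simp [clauseOf, this, Finset.mem_filter, hi]
    · push_neg at h
      refine ⟨false, funext fun i => ?_⟩
      by_cases hi : (c.1 i).isSome
      · obtain ⟨b, hb⟩ := Option.isSome_iff_exists.mp hi
        have hne : b ≠ !σ i := fun hb' => h i (hb' ▸ hb)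
        have : b = σ i := by revert hne; cases b <;> cases σ i <;> simp
        simp [clauseOf, hb, this, Finset.mem_filter, hi]
      · have : c.1 i = none := Option.not_isSome_iff_eq_none.mp hi
        simp [clauseOf, this, Finset.mem_filter, hi]
  · rintro ⟨ε, hc⟩ ⟨⟨i, hi⟩, ⟨j, hj⟩⟩
    rw [hc] at hi hj
    unfold clauseOf at hi hj
    cases ε
    · -- pattern is σ itself: no false literal, contradiction from hj
      split_ifs at hj <;> simp at hj
    · split_ifs at hi <;> simp at hi


lemma not_nae_clauseOf (σ : Fin n → Bool) (c : Clause n k) (s : Finset (Fin n)) (ε : Bool)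
    (h : c.1 = clauseOf s (fun j => ε ^^ σ j)) : ¬ NAESatC σ c := by
  rw [not_nae_iff]
  refine ⟨ε, ?_⟩
  rw [h, support_clauseOf]

/-- support of a clause -/
def supp (c : Clause n k) : Finset (Fin n) :=
  Finset.univ.filter fun i => (c.1 i).isSome

lemma supp_card (c : Clause n k) : (supp c).card = k := c.2

lemma card_bad (hk : 0 < k) (σ : Fin n → Bool) (S : Finset (Finset (Fin n)))
    (hS : ∀ s ∈ S, s.card = k) :
    ((S ×ˢ (Finset.univ : Finset Bool)).card =
      (Finset.univ.filter fun c : Clause n k =>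
        ¬ NAESatC σ c ∧ supp c ∈ S).card) := by
  refine Finset.card_bij
    (fun p _ => (⟨clauseOf p.1 (fun j => p.2 ^^ σ j), by
      rw [support_clauseOf]
      exact hS p.1 (Finset.mem_product.mp ‹_›).1⟩ : Clause n k)) ?_ ?_ ?_
  · rintro ⟨s, ε⟩ hp
    have hs : s ∈ S := (Finset.mem_product.mp hp).1
    simp only [Finset.mem_filter, Finset.mem_univ, true_and]
    constructor
    · exact not_nae_clauseOf σ _ s ε rfl
    · show (Finset.univ.filter fun i => ((clauseOf s (fun j => ε ^^ σ j)) i).isSome) ∈ S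
      rw [support_clauseOf]; exact hs
  · rintro ⟨s, ε⟩ hp ⟨s', ε'⟩ hp' h
    have hfun : clauseOf s (fun j => ε ^^ σ j) = clauseOf s' (fun j => ε' ^^ σ j) :=
      congrArg Subtype.val h
    have hs : s = s' := by
      have := congrArg (fun g => Finset.univ.filter fun i => (g i).isSome) hfun
      simpa only [support_clauseOf] using this
    subst hs
    obtain ⟨i, hi⟩ := Finset.card_pos.mp (by rw [hS s (Finset.mem_product.mp hp).1]; exact hk)
    have := congrFun hfun i
    simp only [clauseOf, if_pos hi, Option.some.injEq] at this
    have hε : ε = ε' := by revert this; cases ε <;> cases ε' <;> cases σ i <;> simp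
    rw [hε]
  · intro c hc
    simp only [Finset.mem_filter, Finset.mem_univ, true_and] at hc
    obtain ⟨ε, hce⟩ := (not_nae_iff σ c).mp hc.1
    refine ⟨(supp c, ε), Finset.mem_product.mpr ⟨hc.2, Finset.mem_univ _⟩, ?_⟩
    exact Subtype.ext hce.symm

lemma card_total (hk : 0 < k) (hkn : k ≤ n) :
    Fintype.card (Clause n k) = n.choose k * 2 ^ k := by
  classical
  rw [← Finset.card_univ]
  have hbij : (((Finset.univ : Finset (Fin n)).powersetCard k).sigma
      fun s => s.powerset).card = (Finset.univ : Finset (Clause n k)).card := by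
    refine Finset.card_bij
      (fun p _ => (⟨clauseOf p.1 (fun j => decide (j ∈ p.2)), by
        rw [support_clauseOf]
        exact (Finset.mem_powersetCard.mp (Finset.mem_sigma.mp ‹_›).1).2⟩ : Clause n k))
      (fun _ _ => Finset.mem_univ _) ?_ ?_
    · rintro ⟨s, u⟩ hp ⟨s', u'⟩ hp' h
      have hfun : clauseOf s (fun j => decide (j ∈ u)) =
          clauseOf s' (fun j => decide (j ∈ u')) := congrArg Subtype.val h
      have hs : s = s' := by
        have := congrArg (fun g => Finset.univ.filter fun i => (g i).isSome) hfun
        simpa only [support_clauseOf] using this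
      subst hs
      have hu : u = u' := by
        have husub : u ⊆ s := Finset.mem_powerset.mp (Finset.mem_sigma.mp hp).2
        have husub' : u' ⊆ s := Finset.mem_powerset.mp (Finset.mem_sigma.mp hp').2
        ext j
        by_cases hj : j ∈ s
        · have := congrFun hfun j
          simp only [clauseOf, if_pos hj, Option.some.injEq] at this
          constructor <;> intro hju
          · exact of_decide_eq_true (this ▸ decide_eq_true hju)
          · exact of_decide_eq_true (this.symm ▸ decide_eq_true hju)
        · constructor <;> intro hju
          · exact absurd (husub hju) hj
          · exact absurd (husub' hju) hj
      subst hu; rfl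
    · intro c _
      refine ⟨⟨supp c, (supp c).filter fun j => c.1 j = some true⟩,
        Finset.mem_sigma.mpr ⟨Finset.mem_powersetCard.mpr ⟨Finset.subset_univ _, supp_card c⟩,
          Finset.mem_powerset.mpr (Finset.filter_subset _ _)⟩, ?_⟩
      refine Subtype.ext (funext fun j => ?_)
      by_cases hj : (c.1 j).isSome
      · obtain ⟨b, hb⟩ := Option.isSome_iff_exists.mp hj
        have hjs : j ∈ supp c := by simp [supp, hj]
        cases b
        · have : j ∉ (supp c).filter fun j => c.1 j = some true := by simp [hb]
          simp [clauseOf, hjs, this, hb]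
        · have : j ∈ (supp c).filter fun j => c.1 j = some true := by simp [hjs, hb]
          simp [clauseOf, hjs, this, hb]
      · have hnone : c.1 j = none := Option.not_isSome_iff_eq_none.mp hj
        have hjs : j ∉ supp c := by simp [supp, hnone]
        simp [clauseOf, hjs, hnone]
  rw [← hbij, Finset.card_sigma]
  rw [Finset.sum_congr rfl (fun s hs => by
    rw [Finset.card_powerset, (Finset.mem_powersetCard.mp hs).2])]
  rw [Finset.sum_const, smul_eq_mul, Finset.card_powersetCard, Finset.card_univ,
    Fintype.card_fin]


lemma not_nae_pair_iff (hk : 0 < k) (σ τ : Fin n → Bool) (c : Clause n k) :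
    (¬ NAESatC σ c ∧ ¬ NAESatC τ c) ↔
      (¬ NAESatC σ c ∧ supp c ∈
        ((Finset.univ.filter fun i => σ i = τ i).powersetCard k ∪
         (Finset.univ.filter fun i => ¬ σ i = τ i).powersetCard k)) := by
  refine and_congr_right fun hσ => ?_
  obtain ⟨ε, hcσ⟩ := (not_nae_iff σ c).mp hσ
  have hsupp : (Finset.univ.filter fun i => (c.1 i).isSome) = supp c := rfl
  rw [hsupp] at hcσ
  have hval : ∀ i ∈ supp c, c.1 i = some (ε ^^ σ i) := fun i hi => by
    rw [hcσ]; simp [clauseOf, hi]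
  constructor
  · intro hτ
    obtain ⟨δ, hcτ⟩ := (not_nae_iff τ c).mp hτ
    rw [hsupp] at hcτ
    have hvalτ : ∀ i ∈ supp c, c.1 i = some (δ ^^ τ i) := fun i hi => by
      rw [hcτ]; simp [clauseOf, hi]
    rw [Finset.mem_union]
    by_cases hεδ : ε = δ
    · left
      refine Finset.mem_powersetCard.mpr ⟨fun i hi => ?_, supp_card c⟩
      have h1 := (hval i hi).symm.trans (hvalτ i hi)
      simp only [Option.some.injEq] at h1
      subst hεδ
      simp only [Finset.mem_filter, Finset.mem_univ, true_and]
      revert h1; cases ε <;> cases σ i <;> cases τ i <;> simp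
    · right
      refine Finset.mem_powersetCard.mpr ⟨fun i hi => ?_, supp_card c⟩
      have h1 := (hval i hi).symm.trans (hvalτ i hi)
      simp only [Option.some.injEq] at h1
      simp only [Finset.mem_filter, Finset.mem_univ, true_and]
      revert h1 hεδ; cases ε <;> cases δ <;> cases σ i <;> cases τ i <;> simp
  · intro hs
    rw [Finset.mem_union] at hs
    rcases hs with hs | hs
    · have hsub := (Finset.mem_powersetCard.mp hs).1
      refine not_nae_clauseOf τ c (supp c) ε (hcσ.trans (clauseOf_congr fun i hi => ?_))
      have : σ i = τ i := by
        have := hsub hi; simp only [Finset.mem_filter] at this; exact this.2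
      rw [this]
    · have hsub := (Finset.mem_powersetCard.mp hs).1
      refine not_nae_clauseOf τ c (supp c) (!ε) (hcσ.trans (clauseOf_congr fun i hi => ?_))
      have hne : ¬ σ i = τ i := by
        have := hsub hi; simp only [Finset.mem_filter] at this; exact this.2
      revert hne; cases ε <;> cases σ i <;> cases τ i <;> simp

lemma choose_mul_pow_le {m N k : ℕ} (h : m ≤ N) :
    m.choose k * N ^ k ≤ N.choose k * m ^ k := by
  have hpow : ∀ M : ℕ, M ^ k = ∏ _i ∈ Finset.range k, M := fun M => by
    simp [Finset.prod_const]
  have key : m.descFactorial k * N ^ k ≤ N.descFactorial k * m ^ k := by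
    rw [Nat.descFactorial_eq_prod_range, Nat.descFactorial_eq_prod_range, hpow N, hpow m,
      ← Finset.prod_mul_distrib, ← Finset.prod_mul_distrib]
    refine Finset.prod_le_prod' fun i _ => ?_
    have h1 : i * m ≤ i * N := Nat.mul_le_mul_left i h
    calc (m - i) * N = m * N - i * N := by rw [Nat.sub_mul]
      _ ≤ m * N - i * m := Nat.sub_le_sub_left h1 (m * N)
      _ = N * m - i * m := by rw [Nat.mul_comm m N]
      _ = (N - i) * m := by rw [Nat.sub_mul]
  rw [Nat.descFactorial_eq_factorial_mul_choose, Nat.descFactorial_eq_factorial_mul_choose,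
    mul_assoc, mul_assoc] at key
  exact Nat.le_of_mul_le_mul_left key (Nat.factorial_pos k)

lemma choose_ratio_le {m N k : ℕ} (h : m ≤ N) (hN : 0 < N) (hkN : k ≤ N) :
    (m.choose k : ℝ) / (N.choose k : ℝ) ≤ ((m : ℝ) / N) ^ k := by
  have hC : (0:ℝ) < (N.choose k : ℝ) := by exact_mod_cast Nat.choose_pos hkN
  have hNR : (0:ℝ) < (N:ℝ) := by exact_mod_cast hN
  rw [div_pow, div_le_div_iff₀ hC (pow_pos hNR k)]
  have := choose_mul_pow_le (k := k) h
  calc (m.choose k : ℝ) * (N:ℝ) ^ k = ((m.choose k * N ^ k : ℕ) : ℝ) := by push_cast; ring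
    _ ≤ ((N.choose k * m ^ k : ℕ) : ℝ) := by exact_mod_cast this
    _ = (m:ℝ) ^ k * (N.choose k : ℝ) := by push_cast; ring

end NAEAux

/-- If `σ, τ` agree on exactly `z` of the `n` variables, then the number of
`k`-clauses NAE-satisfied by both `σ` and `τ` equals
`|C_k(n)| · (1 - 2^(1-k)(2 - (C(z,k) + C(n-z,k))/C(n,k)))`, which is at most
`|C_k(n)| · f(z/n)` where `f(α) = 1 - 2^(1-k)(2 - α^k - (1-α)^k)`. -/
theorem nae_pair_correlation (k n : ℕ) (hk : 2 ≤ k) (hn : k ≤ n)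
    (σ τ : Fin n → Bool) (z : ℕ)
    (hz : z = (Finset.univ.filter fun i => σ i = τ i).card) :
    ((Finset.univ.filter fun c : Clause n k => NAESatC σ c ∧ NAESatC τ c).card : ℝ)
        = (Fintype.card (Clause n k) : ℝ) *
            (1 - (2 : ℝ) ^ (1 - (k : ℤ)) *
              (2 - ((z.choose k : ℝ) + ((n - z).choose k : ℝ)) / (n.choose k : ℝ))) ∧
    ((Finset.univ.filter fun c : Clause n k => NAESatC σ c ∧ NAESatC τ c).card : ℝ)
        ≤ (Fintype.card (Clause n k) : ℝ) * fPair k ((z : ℝ) / n) := by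
  classical
  have hk0 : 0 < k := by omega
  have hn0 : 0 < n := by omega
  set A : Finset (Fin n) := Finset.univ.filter (fun i => σ i = τ i) with hA
  set D : Finset (Fin n) := Finset.univ.filter (fun i => ¬ σ i = τ i) with hD
  have hzA : A.card = z := hz.symm
  have hzn : z ≤ n := by
    rw [hz]
    simpa using Finset.card_filter_le Finset.univ (fun i => σ i = τ i)
  have hDcard : D.card = n - z := by
    have hD' : D = Finset.univ \ A := by
      rw [hA, hD]
      simp [Finset.filter_not]
    rw [hD', Finset.card_sdiff_of_subset (Finset.subset_univ _), Finset.card_univ,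
      Fintype.card_fin, hzA]
  -- total count
  have hN : Fintype.card (Clause n k) = n.choose k * 2 ^ k := NAEAux.card_total hk0 hn
  -- count of clauses failing NAE for a single assignment
  have hsingle : ∀ ρ : Fin n → Bool,
      (Finset.univ.filter fun c : Clause n k => ¬ NAESatC ρ c).card = n.choose k * 2 := by
    intro ρ
    have hb := NAEAux.card_bad hk0 ρ ((Finset.univ : Finset (Fin n)).powersetCard k)
      (fun s hs => (Finset.mem_powersetCard.mp hs).2)
    have heq : (Finset.univ.filter fun c : Clause n k =>
        ¬ NAESatC ρ c ∧ NAEAux.supp c ∈ (Finset.univ : Finset (Fin n)).powersetCard k)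
        = Finset.univ.filter fun c : Clause n k => ¬ NAESatC ρ c := by
      refine Finset.filter_congr fun c _ => ?_
      simp [Finset.mem_powersetCard, Finset.subset_univ, NAEAux.supp_card c]
    rw [heq] at hb
    rw [← hb, Finset.card_product, Finset.card_powersetCard, Finset.card_univ,
      Fintype.card_fin, Finset.card_univ, Fintype.card_bool]
  -- count of clauses failing NAE for both assignments
  have hdisj : Disjoint (A.powersetCard k) (D.powersetCard k) := by
    rw [Finset.disjoint_left]
    intro s hsA hsD
    obtain ⟨hsubA, hcard⟩ := Finset.mem_powersetCard.mp hsA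
    obtain ⟨hsubD, _⟩ := Finset.mem_powersetCard.mp hsD
    obtain ⟨i, hi⟩ := Finset.card_pos.mp (hcard ▸ hk0)
    have h1 := hsubA hi
    have h2 := hsubD hi
    rw [hA, Finset.mem_filter] at h1
    rw [hD, Finset.mem_filter] at h2
    exact h2.2 h1.2
  have hpair : (Finset.univ.filter fun c : Clause n k =>
      ¬ NAESatC σ c ∧ ¬ NAESatC τ c).card = (z.choose k + (n - z).choose k) * 2 := by
    have hb := NAEAux.card_bad hk0 σ (A.powersetCard k ∪ D.powersetCard k)
      (fun s hs => by
        rcases Finset.mem_union.mp hs with h | h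
        · exact (Finset.mem_powersetCard.mp h).2
        · exact (Finset.mem_powersetCard.mp h).2)
    have heq : (Finset.univ.filter fun c : Clause n k =>
        ¬ NAESatC σ c ∧ NAEAux.supp c ∈ (A.powersetCard k ∪ D.powersetCard k))
        = Finset.univ.filter fun c : Clause n k => ¬ NAESatC σ c ∧ ¬ NAESatC τ c := by
      refine Finset.filter_congr fun c _ => ?_
      exact (NAEAux.not_nae_pair_iff hk0 σ τ c).symm
    rw [heq] at hb
    rw [← hb, Finset.card_product, Finset.card_union_of_disjoint hdisj,
      Finset.card_powersetCard, Finset.card_powersetCard, hzA, hDcard,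
      Finset.card_univ, Fintype.card_bool]
  -- inclusion-exclusion
  set G := Finset.univ.filter fun c : Clause n k => NAESatC σ c ∧ NAESatC τ c with hG
  set X := Finset.univ.filter fun c : Clause n k => ¬ NAESatC σ c with hX
  set Y := Finset.univ.filter fun c : Clause n k => ¬ NAESatC τ c with hY
  have hcompl : G.card + (X ∪ Y).card = Fintype.card (Clause n k) := by
    have h1 : (Finset.univ.filter fun c : Clause n k =>
        ¬ (NAESatC σ c ∧ NAESatC τ c)) = X ∪ Y := by
      rw [hX, hY, ← Finset.filter_or]
      exact Finset.filter_congr fun c _ => by tauto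
    have h2 := Finset.card_filter_add_card_filter_not
      (s := (Finset.univ : Finset (Clause n k)))
      (p := fun c => NAESatC σ c ∧ NAESatC τ c)
    rw [h1, Finset.card_univ] at h2
    exact h2
  have hinter : X ∩ Y = Finset.univ.filter fun c : Clause n k =>
      ¬ NAESatC σ c ∧ ¬ NAESatC τ c := by
    rw [hX, hY, ← Finset.filter_and]
  have hunion : (X ∪ Y).card + (z.choose k + (n - z).choose k) * 2 =
      X.card + Y.card := by
    have := Finset.card_union_add_card_inter X Y
    rw [hinter, hpair] at this
    exact this
  have hXc : X.card = n.choose k * 2 := hsingle σ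
  have hYc : Y.card = n.choose k * 2 := hsingle τ
  -- the real-valued count of good clauses
  have hCpos : (0:ℝ) < (n.choose k : ℝ) := by exact_mod_cast Nat.choose_pos hn
  have hGreal : (G.card : ℝ) = (n.choose k : ℝ) * 2 ^ k - 4 * (n.choose k : ℝ)
      + 2 * ((z.choose k : ℝ) + ((n - z).choose k : ℝ)) := by
    have e1 : (G.card : ℝ) + ((X ∪ Y).card : ℝ) = (n.choose k : ℝ) * 2 ^ k := by
      have h := hcompl
      rw [hN] at h
      exact_mod_cast h
    have e2 : ((X ∪ Y).card : ℝ)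
        + ((z.choose k : ℝ) + ((n - z).choose k : ℝ)) * 2
        = (n.choose k : ℝ) * 2 + (n.choose k : ℝ) * 2 := by
      have h := hunion
      rw [hXc, hYc] at h
      exact_mod_cast h
    linarith
  have he : (2:ℝ) ^ (1 - (k:ℤ)) = 2 / 2 ^ k := by
    rw [zpow_sub₀ (two_ne_zero), zpow_one, zpow_natCast]
  have hEq : (G.card : ℝ) = (Fintype.card (Clause n k) : ℝ) *
      (1 - (2:ℝ) ^ (1 - (k:ℤ)) *
        (2 - ((z.choose k : ℝ) + ((n - z).choose k : ℝ)) / (n.choose k : ℝ))) := by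
    rw [hGreal, hN, he]
    push_cast
    have h2k : (2:ℝ) ^ k ≠ 0 := by positivity
    field_simp
    ring
  refine ⟨hEq, ?_⟩
  -- the inequality
  have hnR : (0:ℝ) < (n:ℝ) := by exact_mod_cast hn0
  have hr1 : (z.choose k : ℝ) / (n.choose k : ℝ) ≤ ((z:ℝ)/n) ^ k :=
    NAEAux.choose_ratio_le hzn hn0 hn
  have hr2 : ((n - z).choose k : ℝ) / (n.choose k : ℝ) ≤ (1 - (z:ℝ)/n) ^ k := by
    have h1 : (((n - z : ℕ)):ℝ) / n = 1 - (z:ℝ)/n := by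
      rw [Nat.cast_sub hzn]; field_simp
    have := NAEAux.choose_ratio_le (Nat.sub_le n z) hn0 hn
    rwa [h1] at this
  have hkey : ((z.choose k : ℝ) + ((n - z).choose k : ℝ)) / (n.choose k : ℝ)
      ≤ ((z:ℝ)/n) ^ k + (1 - (z:ℝ)/n) ^ k := by
    rw [add_div]; exact add_le_add hr1 hr2
  have heps : (0:ℝ) ≤ (2:ℝ) ^ (1 - (k:ℤ)) := by positivity
  have hmono : (1:ℝ) - (2:ℝ) ^ (1 - (k:ℤ)) *
      (2 - ((z.choose k : ℝ) + ((n - z).choose k : ℝ)) / (n.choose k : ℝ))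
      ≤ fPair k ((z:ℝ)/n) := by
    unfold fPair
    nlinarith [mul_nonneg heps (sub_nonneg.mpr hkey)]
  rw [hEq]
  exact mul_le_mul_of_nonneg_left hmono (Nat.cast_nonneg _)
end

section
/- For all integers k ≥ 2, n ≥ k and m ≥ 1, the second moment of the number X of NAE-satisfying assignments of F_k(n,m) satisfies E[X^2] ≤ 2^n · Σ_{z=0}^{n} binom(n,z) · f(z/n)^m, where f(α) = 1 − 2^{1−k}·(2 − α^k − (1−α)^k); equivalently, Σ_{F ∈ C_k(n)^m} (number of NAE-satisfying assignments of F)^2 ≤ |C_k(n)|^m · 2^n · Σ_{z=0}^{n} binom(n,z)·f(z/n)^m. -/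
open scoped Classical

/-- The number `X` of NAE-satisfying truth assignments of a formula `F`. -/
noncomputable def numNAE {n k m : ℕ} (F : Fin m → Clause n k) : ℕ :=
  (Finset.univ.filter fun σ : Fin n → Bool => ∀ j, NAESatC σ (F j)).card

/-!
Expanding `X(F)^2` as a count of pairs `(σ, τ)` and exchanging the sums gives
`∑_F X(F)^2 = ∑_{σ,τ} N(σ,τ)^m`, where `N(σ,τ)` is the number of clauses NAE-satisfied by both
`σ` and `τ`. A clause is not NAE-satisfied by `σ` iff all its literals are true under `σ` or all
are true under `¬σ`; each of these two families has `C(n,k)` members, and the clauses all of whose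
literals are true under both `g` and `h` are exactly those living on the `a` variables where `g`
and `h` agree, `C(a,k)` of them. Inclusion–exclusion then gives
`N(σ,τ) ≤ |C| - 4 C(n,k) + 2 C(a,k) + 2 C(n-a,k)`, with `a` the number of agreements of `σ` and
`τ`, and `C(a,k) ≤ C(n,k) (a/n)^k` together with `|C| = 2^k C(n,k)` turns this into
`N(σ,τ) ≤ |C| f(a/n)`. Grouping the `τ` by `a` produces the binomial sum.
-/

open Finset

section Agree

variable {ι : Type*} [Fintype ι]

def agree (σ τ : ι → Bool) : Finset ι := univ.filter fun i => σ i = τ i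

theorem card_agree_not_right (σ τ : ι → Bool) :
    (agree σ fun i => !τ i).card = Fintype.card ι - (agree σ τ).card := by
  rw [← card_compl]
  congr 1
  ext i
  simp only [agree, mem_filter, mem_compl, mem_univ, true_and, Bool.eq_not]

theorem card_agree_not_left (σ τ : ι → Bool) :
    (agree (fun i => !σ i) τ).card = Fintype.card ι - (agree σ τ).card := by
  rw [← card_compl]
  congr 1
  ext i
  simp only [agree, mem_filter, mem_compl, mem_univ, true_and, Bool.not_eq]

theorem agree_not_not (σ τ : ι → Bool) : agree (fun i => !σ i) (fun i => !τ i) = agree σ τ := by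
  simp [agree]

theorem sum_agree_eq_sum_range {M : Type*} [DecidableEq ι] [AddCommMonoid M]
    (σ : ι → Bool) (G : ℕ → M) :
    ∑ τ : ι → Bool, G (agree σ τ).card =
      ∑ z ∈ range (Fintype.card ι + 1), (Fintype.card ι).choose z • G z := by
  rw [← card_univ, ← sum_powerset_apply_card]
  refine sum_nbij' (agree σ) (fun S i => if i ∈ S then σ i else !σ i) (fun _ _ => by simp)
    (fun _ _ => mem_univ _) (fun τ _ => ?_) (fun S _ => ?_) fun _ _ => rfl
  · funext i
    by_cases h : σ i = τ i <;> simp_all [agree, Bool.eq_not]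
  · ext i
    by_cases h : i ∈ S <;> simp [agree, h]

end Agree

theorem choose_mul_pow_le_choose_mul_pow {a n : ℕ} (h : a ≤ n) (k : ℕ) :
    a.choose k * n ^ k ≤ n.choose k * a ^ k := by
  have hdesc : a.descFactorial k * n ^ k ≤ n.descFactorial k * a ^ k := by
    have hprod (x y : ℕ) : (∏ i ∈ range k, (x - i)) * y ^ k = ∏ i ∈ range k, (x - i) * y := by
      rw [prod_mul_distrib, prod_const, card_range]
    rw [Nat.descFactorial_eq_prod_range, Nat.descFactorial_eq_prod_range, hprod, hprod]
    refine prod_le_prod' fun i _ => ?_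
    calc (a - i) * n = a * n - i * n := Nat.sub_mul ..
      _ ≤ n * a - i * a := by rw [mul_comm a n]; exact Nat.sub_le_sub_left (by gcongr) _
      _ = (n - i) * a := (Nat.sub_mul ..).symm
  rw [Nat.descFactorial_eq_factorial_mul_choose, Nat.descFactorial_eq_factorial_mul_choose,
    mul_assoc, mul_assoc] at hdesc
  exact Nat.le_of_mul_le_mul_left hdesc (Nat.factorial_pos k)

theorem choose_le_choose_mul_div_pow {a n : ℕ} (h : a ≤ n) (hn : 0 < n) (k : ℕ) :
    (a.choose k : ℝ) ≤ n.choose k * ((a : ℝ) / n) ^ k := by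
  rw [div_pow, mul_div_assoc', le_div_iff₀ (by positivity)]
  exact_mod_cast choose_mul_pow_le_choose_mul_pow h k

theorem card_filter_forall_mem {ι α : Type*} [Fintype ι] [DecidableEq ι] [Fintype α]
    (S : Finset α) : (univ.filter fun F : ι → α => ∀ j, F j ∈ S).card = S.card ^ Fintype.card ι := by
  have hpi : (univ.filter fun F : ι → α => ∀ j, F j ∈ S) = Fintype.piFinset fun _ => S := by
    ext F
    simp
  rw [hpi, Fintype.card_piFinset, prod_const, card_univ]

namespace Clause

variable {n k : ℕ}

def support (c : Clause n k) : Finset (Fin n) := univ.filter fun i => (c.1 i).isSome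

theorem mem_support {c : Clause n k} {i : Fin n} : i ∈ c.support ↔ (c.1 i).isSome := by
  simp [support]

theorem card_support (c : Clause n k) : c.support.card = k := c.2

def ofSigns (s : Finset (Fin n)) (hs : s.card = k) (g : Fin n → Bool) : Clause n k :=
  ⟨fun i => if i ∈ s then some (g i) else none, by convert hs; ext i; by_cases i ∈ s <;> simp [*]⟩

@[simp]
theorem support_ofSigns (s : Finset (Fin n)) (hs : s.card = k) (g : Fin n → Bool) :
    (ofSigns s hs g).support = s := by
  ext i; by_cases i ∈ s <;> simp [mem_support, ofSigns, *]

theorem eq_ofSigns (c : Clause n k) {g : Fin n → Bool} (hg : ∀ i b, c.1 i = some b → b = g i) :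
    c = ofSigns c.support c.card_support g := by
  ext1; funext i
  cases h : c.1 i with
  | none => simp [ofSigns, mem_support, h]
  | some b => simp [ofSigns, mem_support, h, hg i b h]

theorem card_filter_support_eq (s : Finset (Fin n)) (hs : s.card = k) :
    (univ.filter fun c : Clause n k => c.support = s).card = 2 ^ k := by
  rw [show 2 ^ k = s.powerset.card by rw [card_powerset, hs]]
  refine card_bij' (fun c _ => s.filter fun i => c.1 i = some true)
    (fun t _ => ofSigns s hs fun i => decide (i ∈ t)) (fun c _ => by simp) (fun t _ => by simp)
    (fun c hc => ?_) (fun t ht => ?_)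
  · simp only [mem_filter, mem_univ, true_and] at hc
    ext1; funext i
    have hi : i ∈ s ↔ (c.1 i).isSome := hc ▸ mem_support
    cases h : c.1 i with
    | none => simp_all [ofSigns]
    | some b => cases b <;> simp_all [ofSigns]
  · ext i
    simp only [mem_filter, ofSigns]
    have hts := mem_powerset.1 ht
    by_cases hi : i ∈ s
    · simp [hi]
    · simpa [hi] using fun h => hi (hts h)

theorem card_eq : Fintype.card (Clause n k) = 2 ^ k * n.choose k := by
  rw [← card_univ, card_eq_sum_card_fiberwise (f := support) (t := powersetCard k univ)
    (fun c _ => mem_powersetCard.2 ⟨subset_univ _, c.card_support⟩)]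
  rw [sum_congr rfl fun s hs => card_filter_support_eq s (mem_powersetCard.1 hs).2, sum_const,
    card_powersetCard, card_univ, Fintype.card_fin, smul_eq_mul, mul_comm]

def allTrueWithin (S : Finset (Fin n)) (g : Fin n → Bool) : Finset (Clause n k) :=
  univ.filter fun c => ∀ i b, c.1 i = some b → i ∈ S ∧ b = g i

theorem card_allTrueWithin (S : Finset (Fin n)) (g : Fin n → Bool) :
    (allTrueWithin S g : Finset (Clause n k)).card = S.card.choose k := by
  rw [← card_powersetCard]
  refine card_bij' (fun c _ => c.support) (fun s hs => ofSigns s (mem_powersetCard.1 hs).2 g)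
    (fun c hc => ?_) (fun s hs => ?_) (fun c hc => ?_) (fun s _ => support_ofSigns ..)
  · simp only [allTrueWithin, mem_filter, mem_univ, true_and] at hc
    refine mem_powersetCard.2 ⟨fun i hi => ?_, c.card_support⟩
    obtain ⟨b, hb⟩ := Option.isSome_iff_exists.1 (mem_support.1 hi)
    exact (hc i b hb).1
  · simp only [allTrueWithin, mem_filter, mem_univ, true_and, ofSigns]
    intro i b
    split_ifs with hi
    · rintro ⟨⟩; exact ⟨(mem_powersetCard.1 hs).1 hi, rfl⟩
    · simp
  · simp only [allTrueWithin, mem_filter, mem_univ, true_and] at hc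
    exact (c.eq_ofSigns fun i b h => (hc i b h).2).symm

theorem allTrueWithin_inter (S : Finset (Fin n)) (g h : Fin n → Bool) :
    (allTrueWithin S g ∩ allTrueWithin S h : Finset (Clause n k)) =
      allTrueWithin (S.filter fun i => g i = h i) g := by
  ext c
  simp only [allTrueWithin, mem_inter, mem_filter, mem_univ, true_and]
  refine ⟨fun ⟨hg, hh⟩ i b hb => ?_, fun hc => ⟨fun i b hb => ?_, fun i b hb => ?_⟩⟩
  · exact ⟨⟨(hg i b hb).1, (hg i b hb).2 ▸ (hh i b hb).2⟩, (hg i b hb).2⟩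
  · exact ⟨(hc i b hb).1.1, (hc i b hb).2⟩
  · exact ⟨(hc i b hb).1.1, (hc i b hb).2.trans (hc i b hb).1.2⟩

theorem mem_allTrueWithin_univ {c : Clause n k} {g : Fin n → Bool} :
    c ∈ allTrueWithin univ g ↔ ¬ ∃ i, c.1 i = some (!g i) := by
  simp only [allTrueWithin, mem_filter, mem_univ, true_and, not_exists]
  refine forall_congr' fun i => ?_
  cases c.1 i with
  | none => simp
  | some b => cases b <;> cases g i <;> simp

theorem not_naeSatC_iff {σ : Fin n → Bool} {c : Clause n k} :
    ¬ NAESatC σ c ↔ c ∈ allTrueWithin univ σ ∨ c ∈ allTrueWithin univ (fun i => !σ i) := by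
  simp only [NAESatC, not_and_or, mem_allTrueWithin_univ, Bool.not_not]
  exact or_comm

theorem card_allTrue_inter (g h : Fin n → Bool) :
    (allTrueWithin univ g ∩ allTrueWithin univ h : Finset (Clause n k)).card =
      (agree g h).card.choose k := by
  rw [allTrueWithin_inter, card_allTrueWithin]
  rfl

theorem card_not_naeSatC (hk : 0 < k) (σ : Fin n → Bool) :
    (univ.filter fun c : Clause n k => ¬ NAESatC σ c).card = 2 * n.choose k := by
  have hfilter : (univ.filter fun c : Clause n k => ¬ NAESatC σ c) =
      allTrueWithin univ σ ∪ allTrueWithin univ fun i => !σ i := by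
    ext c
    simp [not_naeSatC_iff]
  have hdisj : (agree σ fun i => !σ i) = ∅ := by simp [agree]
  have hunion := card_union_add_card_inter (allTrueWithin univ σ : Finset (Clause n k))
    (allTrueWithin univ fun i => !σ i)
  rw [card_allTrue_inter, hdisj, card_empty, Nat.choose_eq_zero_of_lt hk, card_allTrueWithin,
    card_allTrueWithin, card_univ, Fintype.card_fin] at hunion
  rw [hfilter]
  omega

theorem card_not_naeSatC_inter_le (σ τ : Fin n → Bool) :
    ((univ.filter fun c : Clause n k => ¬ NAESatC σ c) ∩
      (univ.filter fun c : Clause n k => ¬ NAESatC τ c)).card ≤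
      2 * (agree σ τ).card.choose k + 2 * (n - (agree σ τ).card).choose k := by
  set P : Finset (Clause n k) := allTrueWithin univ σ
  set Q : Finset (Clause n k) := allTrueWithin univ fun i => !σ i
  set R : Finset (Clause n k) := allTrueWithin univ τ
  set T : Finset (Clause n k) := allTrueWithin univ fun i => !τ i
  have hsub : (univ.filter fun c : Clause n k => ¬ NAESatC σ c) ∩
      (univ.filter fun c : Clause n k => ¬ NAESatC τ c) ⊆ (P ∩ R ∪ P ∩ T) ∪ (Q ∩ R ∪ Q ∩ T) := by
    intro c
    simp only [mem_inter, mem_filter, mem_univ, true_and, not_naeSatC_iff, mem_union]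
    tauto
  calc _ ≤ ((P ∩ R ∪ P ∩ T) ∪ (Q ∩ R ∪ Q ∩ T)).card := card_le_card hsub
    _ ≤ ((P ∩ R).card + (P ∩ T).card) + ((Q ∩ R).card + (Q ∩ T).card) :=
      (card_union_le _ _).trans (add_le_add (card_union_le _ _) (card_union_le _ _))
    _ = _ := by
      simp only [P, Q, R, T, card_allTrue_inter, card_agree_not_left, card_agree_not_right,
        agree_not_not, Fintype.card_fin]
      ring

theorem card_naeSatC_pair_add_le (hk : 0 < k) (σ τ : Fin n → Bool) :
    (univ.filter fun c : Clause n k => NAESatC σ c ∧ NAESatC τ c).card + 4 * n.choose k ≤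
      Fintype.card (Clause n k) + 2 * (agree σ τ).card.choose k +
        2 * (n - (agree σ τ).card).choose k := by
  have hcompl := card_compl_add_card ((univ.filter fun c : Clause n k => ¬ NAESatC σ c) ∪
    (univ.filter fun c : Clause n k => ¬ NAESatC τ c))
  have hunion := card_union_add_card_inter (univ.filter fun c : Clause n k => ¬ NAESatC σ c)
    (univ.filter fun c : Clause n k => ¬ NAESatC τ c)
  rw [card_not_naeSatC hk, card_not_naeSatC hk] at hunion
  have hinter := card_not_naeSatC_inter_le (k := k) σ τ
  have hpair : ((univ.filter fun c : Clause n k => ¬ NAESatC σ c) ∪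
      (univ.filter fun c : Clause n k => ¬ NAESatC τ c))ᶜ =
      univ.filter fun c : Clause n k => NAESatC σ c ∧ NAESatC τ c := by
    ext c
    simp
  rw [hpair] at hcompl
  omega

theorem card_naeSatC_pair_le (hk : 0 < k) (hn : 0 < n) (σ τ : Fin n → Bool) :
    ((univ.filter fun c : Clause n k => NAESatC σ c ∧ NAESatC τ c).card : ℝ) ≤
      Fintype.card (Clause n k) * fPair k ((agree σ τ).card / n) := by
  set a := (agree σ τ).card
  have ha : a ≤ n := (card_le_univ _).trans_eq (Fintype.card_fin n)
  have hcount : ((univ.filter fun c : Clause n k => NAESatC σ c ∧ NAESatC τ c).card : ℝ) +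
      4 * n.choose k ≤ 2 ^ k * n.choose k + 2 * a.choose k + 2 * (n - a).choose k := by
    exact_mod_cast card_eq (n := n) (k := k) ▸ card_naeSatC_pair_add_le hk σ τ
  have hagree := choose_le_choose_mul_div_pow ha hn k
  have hdisagree := choose_le_choose_mul_div_pow (Nat.sub_le n a) hn k
  have hpow : (2 : ℝ) ^ (1 - (k : ℤ)) * 2 ^ k = 2 := by
    rw [← zpow_natCast, ← zpow_add₀ two_ne_zero]; norm_num
  have hsub : ((n - a : ℕ) : ℝ) / n = 1 - (a : ℝ) / n := by
    rw [Nat.cast_sub ha, sub_div, div_self (by positivity)]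
  rw [hsub] at hdisagree
  rw [card_eq, fPair]
  push_cast
  linear_combination hcount + 2 * hagree + 2 * hdisagree +
    (n.choose k : ℝ) * (2 - ((a : ℝ) / n) ^ k - (1 - (a : ℝ) / n) ^ k) * hpow

end Clause

theorem sum_numNAE_sq (n k m : ℕ) :
    ∑ F : Fin m → Clause n k, numNAE F ^ 2 =
      ∑ σ : Fin n → Bool, ∑ τ : Fin n → Bool,
        (univ.filter fun c : Clause n k => NAESatC σ c ∧ NAESatC τ c).card ^ m := by
  have hsq (F : Fin m → Clause n k) : numNAE F ^ 2 = ∑ σ : Fin n → Bool, ∑ τ : Fin n → Bool,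
      if ∀ j, F j ∈ univ.filter fun c => NAESatC σ c ∧ NAESatC τ c then 1 else 0 := by
    simp only [numNAE, sq, card_filter, sum_mul_sum, mem_filter, mem_univ, true_and, forall_and,
      ite_zero_mul_ite_zero, mul_one]
  simp only [hsq]
  rw [sum_comm]
  refine sum_congr rfl fun σ _ => ?_
  rw [sum_comm]
  refine sum_congr rfl fun τ _ => ?_
  rw [← card_filter]
  convert card_filter_forall_mem _
  rw [Fintype.card_fin]

theorem sum_numNAE_sq_le {n k : ℕ} (hk : 0 < k) (hn : 0 < n) (m : ℕ) :
    ∑ F : Fin m → Clause n k, (numNAE F : ℝ) ^ 2 ≤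
      (Fintype.card (Clause n k) : ℝ) ^ m *
        (2 ^ n * ∑ z ∈ range (n + 1), (n.choose z : ℝ) * fPair k ((z : ℝ) / n) ^ m) := by
  set T : ℝ := (Fintype.card (Clause n k) : ℝ)
  calc ∑ F : Fin m → Clause n k, (numNAE F : ℝ) ^ 2
      = ∑ σ : Fin n → Bool, ∑ τ : Fin n → Bool,
          ((univ.filter fun c : Clause n k => NAESatC σ c ∧ NAESatC τ c).card : ℝ) ^ m := by
        exact_mod_cast sum_numNAE_sq n k m
    _ ≤ ∑ σ : Fin n → Bool, ∑ τ : Fin n → Bool, (T * fPair k ((agree σ τ).card / n)) ^ m :=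
        sum_le_sum fun σ _ => sum_le_sum fun τ _ =>
          pow_le_pow_left₀ (Nat.cast_nonneg _) (Clause.card_naeSatC_pair_le hk hn σ τ) m
    _ = ∑ _σ : Fin n → Bool, ∑ z ∈ range (n + 1), (n.choose z : ℝ) * (T * fPair k (z / n)) ^ m := by
        simp only [sum_agree_eq_sum_range _ fun z : ℕ => (T * fPair k (z / n)) ^ m,
          Fintype.card_fin, nsmul_eq_mul]
    _ = T ^ m * (2 ^ n * ∑ z ∈ range (n + 1), (n.choose z : ℝ) * fPair k (z / n) ^ m) := by
        simp only [sum_const, card_univ, Fintype.card_fun, Fintype.card_bool, Fintype.card_fin,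
          nsmul_eq_mul, mul_sum, mul_pow]
        push_cast
        exact sum_congr rfl fun z _ => by ring

theorem nae_ksat_second_moment_general (k n m : ℕ) (hk : 2 ≤ k) (hn : k ≤ n) :
    (∑ F : Fin m → Clause n k, (numNAE F : ℝ) ^ 2) / (Fintype.card (Fin m → Clause n k) : ℝ)
        ≤ 2 ^ n * ∑ z ∈ Finset.range (n + 1), (n.choose z : ℝ) * fPair k ((z : ℝ) / n) ^ m ∧
    (∑ F : Fin m → Clause n k, (numNAE F : ℝ) ^ 2)
        ≤ (Fintype.card (Clause n k) : ℝ) ^ m *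
            (2 ^ n * ∑ z ∈ Finset.range (n + 1), (n.choose z : ℝ) * fPair k ((z : ℝ) / n) ^ m) := by
  have hsum := sum_numNAE_sq_le (by omega : 0 < k) (by omega : 0 < n) m
  have hcard : (Fintype.card (Fin m → Clause n k) : ℝ) = (Fintype.card (Clause n k) : ℝ) ^ m := by
    rw [Fintype.card_fun, Fintype.card_fin, Nat.cast_pow]
  have hpos : (0 : ℝ) < Fintype.card (Clause n k) := by
    rw [Clause.card_eq]
    exact_mod_cast Nat.mul_pos (by positivity) (Nat.choose_pos hn)
  refine ⟨?_, hsum⟩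
  rw [hcard, div_le_iff₀ (pow_pos hpos m), mul_comm]
  exact hsum

/-- **Second moment for NAE `k`-SAT.** For `k ≥ 2`, `n ≥ k`, `m ≥ 1`,
`E[X²] ≤ 2^n ∑_{z=0}^n C(n,z) f(z/n)^m` where `X` is the number of
NAE-satisfying assignments of `F_k(n,m)`; equivalently, the sum over all
`m`-tuples of clauses of `X(F)²` is at most `|C_k(n)|^m` times that bound. -/
theorem nae_ksat_second_moment (k n m : ℕ) (hk : 2 ≤ k) (hn : k ≤ n) (hm : 1 ≤ m) :
    (∑ F : Fin m → Clause n k, (numNAE F : ℝ) ^ 2) / (Fintype.card (Fin m → Clause n k) : ℝ)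
        ≤ 2 ^ n * ∑ z ∈ Finset.range (n + 1), (n.choose z : ℝ) * fPair k ((z : ℝ) / n) ^ m ∧
    (∑ F : Fin m → Clause n k, (numNAE F : ℝ) ^ 2)
        ≤ (Fintype.card (Clause n k) : ℝ) ^ m *
            (2 ^ n * ∑ z ∈ Finset.range (n + 1), (n.choose z : ℝ) * fPair k ((z : ℝ) / n) ^ m) :=
  nae_ksat_second_moment_general k n m hk hn
end

section
/- For all integers k ≥ 74, all real r with 0 < r ≤ 2^{k-1}·ln 2, and all α ∈ (1/2, 0.9]: g_r(α) < g_r(1/2); moreover the second derivative of g_r at 1/2 is strictly negative. -/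
/-- The entropy-correlation function
`g_r(α) = f(α)^r / (α^α (1-α)^(1-α))` (with `0^0 = 1`, as for `Real.rpow`). -/
noncomputable def gNAE (k : ℕ) (r : ℝ) (α : ℝ) : ℝ :=
  fPair k α ^ r / (α ^ α * (1 - α) ^ (1 - α))

/-!
Write `g_r = exp (r log f + H)` with `H` the binary entropy. Since
`f α - f (1/2) = 2^(1-k) (α^k + (1-α)^k - 2^(1-k)) ≥ 0` and `log x ≤ x - 1`, the correlation
term gains at most `log 2 · (α^k + (1-α)^k - 2^(1-k)) / f (1/2)` when `r ≤ 2^(k-1) log 2`. A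
second-order Taylor bound makes this at most `log 2 · k(k-1) 0.9^(k-2) (α - 1/2)² / 0.99`, which
is `< 2 (α - 1/2)²` once `k ≥ 74`, while by Pinsker's inequality the entropy loses at least
`2 (α - 1/2)²`. At `1/2` the derivative of `log g_r` vanishes, so
`g_r''(1/2) = g_r(1/2) (r f''(1/2) / f(1/2) - 4)`, and the same estimates make the bracket negative.
-/

open Real Set Filter Topology

lemma le_of_hasDerivAt_le {f g f' g' : ℝ → ℝ} {a b : ℝ} (hab : a ≤ b)
    (hf : ∀ x ∈ Icc a b, HasDerivAt f (f' x) x) (hg : ∀ x ∈ Icc a b, HasDerivAt g (g' x) x)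
    (ha : f a ≤ g a) (hle : ∀ x ∈ Icc a b, f' x ≤ g' x) : f b ≤ g b :=
  image_le_of_deriv_right_le_deriv_boundary
    (fun x hx ↦ (hf x hx).continuousAt.continuousWithinAt)
    (fun x hx ↦ (hf x (Ico_subset_Icc_self hx)).hasDerivWithinAt) ha
    (fun x hx ↦ (hg x hx).continuousAt.continuousWithinAt)
    (fun x hx ↦ (hg x (Ico_subset_Icc_self hx)).hasDerivWithinAt)
    (fun x hx ↦ hle x (Ico_subset_Icc_self hx)) (right_mem_Icc.2 hab)

lemma two_mul_le_log_one_add_sub_log_one_sub {x : ℝ} (hx₀ : 0 ≤ x) (hx₁ : x < 1) :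
    2 * x ≤ log (1 + x) - log (1 - x) := by
  have hs := hasSum_log_sub_log_of_abs_lt_one (abs_lt.2 ⟨by linarith, hx₁⟩)
  simpa using le_hasSum hs 0 fun j _ ↦ by positivity

lemma binEntropy_le_log_two_sub_two_mul_sq {p : ℝ} (hp₀ : 0 < p) (hp₁ : p < 1) :
    binEntropy p ≤ log 2 - 2 * (p - 2⁻¹) ^ 2 := by
  wlog hp : 2⁻¹ ≤ p generalizing p
  · have := this (p := 1 - p) (by linarith) (by linarith) (by linarith)
    rw [binEntropy_one_sub] at this
    linarith
  have hderiv (s : ℝ) (hs : s ∈ Icc 2⁻¹ p) : HasDerivAt (fun s ↦ binEntropy s + 2 * (s - 2⁻¹) ^ 2)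
      (log (1 - s) - log s + 4 * (s - 2⁻¹)) s := by
    have := (hasDerivAt_binEntropy (by linarith [hs.1]) (by linarith [hs.2])).add
      (((hasDerivAt_id' s).sub_const 2⁻¹).fun_pow 2 |>.const_mul 2)
    exact this.congr_deriv (by simp; ring)
  have hslope (s : ℝ) (hs : s ∈ Icc 2⁻¹ p) : log (1 - s) - log s + 4 * (s - 2⁻¹) ≤ 0 := by
    have h := two_mul_le_log_one_add_sub_log_one_sub (x := 2 * s - 1) (by linarith [hs.1])
      (by linarith [hs.2])
    rw [show 1 + (2 * s - 1) = 2 * s by ring, show 1 - (2 * s - 1) = 2 * (1 - s) by ring,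
      log_mul two_ne_zero (by linarith [hs.1]), log_mul two_ne_zero (by linarith [hs.2])] at h
    linarith
  have := le_of_hasDerivAt_le hp hderiv (fun s _ ↦ hasDerivAt_const s (log 2)) (by simp) hslope
  linarith

lemma deriv_deriv_exp_comp_of_deriv_eq_zero {L L' : ℝ → ℝ} {x d : ℝ}
    (hL : ∀ᶠ y in 𝓝 x, HasDerivAt L (L' y) y) (hx : L' x = 0) (hL' : HasDerivAt L' d x) :
    deriv (deriv fun y ↦ exp (L y)) x = exp (L x) * d := by
  have h : deriv (fun y ↦ exp (L y)) =ᶠ[𝓝 x] fun y ↦ exp (L y) * L' y :=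
    hL.mono fun y hy ↦ hy.exp.deriv
  rw [h.deriv_eq, ((hL.self_of_nhds.exp).fun_mul hL').deriv, hx]
  ring

lemma hasDerivAt_pow_add_sub_pow (p : ℕ) (a y : ℝ) :
    HasDerivAt (fun x ↦ x ^ (p + 1) + (a - x) ^ (p + 1)) ((p + 1) * (y ^ p - (a - y) ^ p)) y := by
  have := (hasDerivAt_pow (p + 1) y).add (((hasDerivAt_id' y).const_sub a).fun_pow (p + 1))
  exact this.congr_deriv (by simp; ring)

lemma hasDerivAt_pow_sub_sub_pow (p : ℕ) (a y : ℝ) :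
    HasDerivAt (fun x ↦ x ^ (p + 1) - (a - x) ^ (p + 1)) ((p + 1) * (y ^ p + (a - y) ^ p)) y := by
  have := (hasDerivAt_pow (p + 1) y).sub (((hasDerivAt_id' y).const_sub a).fun_pow (p + 1))
  exact this.congr_deriv (by simp; ring)

lemma pow_add_two_mul_sub_pow_le {m y : ℝ} (n : ℕ) (hmy : m ≤ y) (hy : y ≤ 2 * m) :
    y ^ (n + 2) + (2 * m - y) ^ (n + 2) ≤
      2 * m ^ (n + 2) + (n + 2) * (n + 1) * y ^ n * (y - m) ^ 2 := by
  have hslope (s : ℝ) (hs : s ∈ Icc m y) :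
      (n + 1 + 1) * (s ^ (n + 1) - (2 * m - s) ^ (n + 1)) ≤
        (n + 2) * (n + 1) * y ^ n * (2 * (s - m)) := by
    refine le_of_hasDerivAt_le hs.1 (fun u _ ↦ (hasDerivAt_pow_sub_sub_pow n (2 * m) u).const_mul _)
      (fun u _ ↦ (((hasDerivAt_id' u).sub_const m).const_mul 2).const_mul _) (le_of_eq (by ring)) ?_
    intro u hu
    have h₁ : u ^ n ≤ y ^ n := pow_le_pow_left₀ (by linarith [hu.1, hs.1]) (hu.2.trans hs.2) n
    have h₂ : (2 * m - u) ^ n ≤ y ^ n :=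
      pow_le_pow_left₀ (by linarith [hu.2, hs.2]) (by linarith [hu.1, hu.2, hs.2]) n
    have : (0 : ℝ) ≤ (n + 2) * (n + 1) := by positivity
    nlinarith [mul_le_mul_of_nonneg_left (add_le_add h₁ h₂) this]
  refine le_of_hasDerivAt_le hmy (fun s _ ↦ hasDerivAt_pow_add_sub_pow (n + 1) (2 * m) s)
    (fun s _ ↦ ((((hasDerivAt_id' s).sub_const m).fun_pow 2).const_mul _).const_add _) ?_ ?_
  · exact le_of_eq (by ring)
  · intro s hs
    convert hslope s hs using 1
    · push_cast; ring
    · simp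

lemma two_mul_half_pow_le_pow_add_one_sub_pow (k : ℕ) {α : ℝ} (h₀ : 0 ≤ α) (h₁ : α ≤ 1) :
    2 * (1 / 2) ^ k ≤ α ^ k + (1 - α) ^ k := by
  have := (convexOn_pow k).2 (mem_Ici.2 h₀) (mem_Ici.2 (sub_nonneg.2 h₁))
    (by norm_num : (0 : ℝ) ≤ 1 / 2) (by norm_num : (0 : ℝ) ≤ 1 / 2) (by norm_num)
  simp only [smul_eq_mul] at this
  rw [show (1 / 2 : ℝ) * α + 1 / 2 * (1 - α) = 1 / 2 by ring] at this
  linarith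

-- `log 2 * (11 / 4) / 0.99 < 2` is what the estimates need; the bound holds from `n = 72`
-- (`k = 74`) on and fails at `n = 71`.
lemma mul_mul_nine_tenths_pow_le (n : ℕ) (hn : 72 ≤ n) :
    ((n : ℝ) + 2) * (n + 1) * (9 / 10) ^ n ≤ 11 / 4 := by
  induction n, hn using Nat.le_induction with
  | base => norm_num
  | succ n hn ih =>
    have : (72 : ℝ) ≤ n := by exact_mod_cast hn
    push_cast
    calc ((n : ℝ) + 1 + 2) * (n + 1 + 1) * (9 / 10) ^ (n + 1)
        = ((n + 3) * (9 / 10)) * ((n + 2) * (9 / 10) ^ n) := by ring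
      _ ≤ (n + 1) * ((n + 2) * (9 / 10) ^ n) := by gcongr; linarith
      _ ≤ 11 / 4 := by linarith

lemma pow_add_one_sub_pow_le {n : ℕ} {α : ℝ} (hn : 72 ≤ n) (h₀ : 1 / 2 ≤ α) (h₁ : α ≤ 9 / 10) :
    α ^ (n + 2) + (1 - α) ^ (n + 2) ≤ 2 * (1 / 2) ^ (n + 2) + 11 / 4 * (α - 1 / 2) ^ 2 := by
  have hψ := pow_add_two_mul_sub_pow_le (m := 1 / 2) n h₀ (by linarith)
  rw [show 2 * (1 / 2 : ℝ) - α = 1 - α by ring] at hψ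
  have hpow : α ^ n ≤ (9 / 10) ^ n := pow_le_pow_left₀ (by linarith) h₁ n
  have := mul_mul_nine_tenths_pow_le n hn
  calc α ^ (n + 2) + (1 - α) ^ (n + 2)
      ≤ 2 * (1 / 2) ^ (n + 2) + (n + 2) * (n + 1) * α ^ n * (α - 1 / 2) ^ 2 := hψ
    _ ≤ 2 * (1 / 2) ^ (n + 2) + (n + 2) * (n + 1) * (9 / 10) ^ n * (α - 1 / 2) ^ 2 := by gcongr
    _ ≤ 2 * (1 / 2) ^ (n + 2) + 11 / 4 * (α - 1 / 2) ^ 2 := by gcongr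

lemma two_pow_sub_one_mul_two_zpow_one_sub {k : ℕ} (hk : 1 ≤ k) :
    (2 : ℝ) ^ (k - 1) * 2 ^ (1 - (k : ℤ)) = 1 := by
  rw [← zpow_natCast, ← zpow_add₀ two_ne_zero, Nat.cast_sub hk]
  simp

lemma fPair_sub_fPair_half (k : ℕ) (α : ℝ) :
    fPair k α - fPair k (1 / 2) = 2 ^ (1 - (k : ℤ)) * (α ^ k + (1 - α) ^ k - 2 * (1 / 2) ^ k) := by
  norm_num [fPair]
  ring

lemma le_fPair {k : ℕ} {α : ℝ} (hk : 9 ≤ k) (h₀ : 0 ≤ α) (h₁ : α ≤ 1) : 99 / 100 ≤ fPair k α := by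
  have hc : (2 : ℝ) ^ (1 - (k : ℤ)) ≤ 1 / 256 := by
    calc (2 : ℝ) ^ (1 - (k : ℤ)) ≤ 2 ^ (-8 : ℤ) := zpow_le_zpow_right₀ one_le_two (by omega)
      _ = 1 / 256 := by norm_num
  have : 0 ≤ α ^ k + (1 - α) ^ k := by have := sub_nonneg.2 h₁; positivity
  have : 0 < (2 : ℝ) ^ (1 - (k : ℤ)) := by positivity
  unfold fPair
  nlinarith

lemma hasDerivAt_fPair (p : ℕ) (y : ℝ) :
    HasDerivAt (fPair (p + 1))
      (2 ^ (1 - ((p + 1 : ℕ) : ℤ)) * ((p + 1) * (y ^ p - (1 - y) ^ p))) y := by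
  have h : fPair (p + 1) = fun x ↦
      1 - 2 ^ (1 - ((p + 1 : ℕ) : ℤ)) * (2 - (x ^ (p + 1) + (1 - x) ^ (p + 1))) := by
    ext x; rw [fPair]; ring
  rw [h]
  exact ((((hasDerivAt_pow_add_sub_pow p 1 y).const_sub 2).const_mul _).const_sub 1).congr_deriv
    (by ring)

lemma gNAE_eq_exp {k : ℕ} {r α : ℝ} (h₀ : 0 < α) (h₁ : α < 1) (hf : 0 < fPair k α) :
    gNAE k r α = exp (r * log (fPair k α) + binEntropy α) := by
  rw [gNAE, rpow_def_of_pos hf, rpow_def_of_pos h₀, rpow_def_of_pos (sub_pos.2 h₁), ← exp_add,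
    ← exp_sub, binEntropy, log_inv, log_inv]
  ring_nf

lemma mul_log_fPair_sub_log_fPair_half_lt {k : ℕ} {r α : ℝ} (hk : 74 ≤ k)
    (hr : r ≤ 2 ^ (k - 1) * log 2) (hα : α ∈ Ioc (1 / 2 : ℝ) (9 / 10)) :
    r * (log (fPair k α) - log (fPair k (1 / 2))) < 2 * (α - 1 / 2) ^ 2 := by
  obtain ⟨n, rfl⟩ : ∃ n, k = n + 2 := ⟨k - 2, by omega⟩
  obtain ⟨hα₀, hα₁⟩ := hα
  set c : ℝ := 2 ^ (1 - ((n + 2 : ℕ) : ℤ))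
  set f := fPair (n + 2)
  set D := α ^ (n + 2) + (1 - α) ^ (n + 2) - 2 * (1 / 2) ^ (n + 2)
  have hD₀ : 0 ≤ D :=
    sub_nonneg.2 (two_mul_half_pow_le_pow_add_one_sub_pow _ (by linarith) (by linarith))
  have hD : D ≤ 11 / 4 * (α - 1 / 2) ^ 2 := by
    linarith [pow_add_one_sub_pow_le (n := n) (by omega) hα₀.le hα₁]
  have hc₀ : 0 < c := by positivity
  have hc : (2 : ℝ) ^ (n + 2 - 1) * c = 1 := two_pow_sub_one_mul_two_zpow_one_sub (by omega)
  have hf : 99 / 100 ≤ f (1 / 2) := le_fPair (by omega) (by norm_num) (by norm_num)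
  have hdiff : f α - f (1 / 2) = c * D := fPair_sub_fPair_half _ _
  have hfα : f (1 / 2) ≤ f α := by nlinarith
  have hlog₀ : 0 ≤ log (f α) - log (f (1 / 2)) := sub_nonneg.2 (log_le_log (by linarith) hfα)
  have hlog : log (f α) - log (f (1 / 2)) ≤ c * D / f (1 / 2) := by
    rw [← log_div (by linarith) (by linarith), ← hdiff, sub_div, div_self (by linarith)]
    exact log_le_sub_one_of_pos (div_pos (by linarith) (by linarith))
  have hlog2 := log_two_lt_d9
  have hsq : 0 < (α - 1 / 2) ^ 2 := by have := sub_pos.2 hα₀; positivity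
  calc r * (log (f α) - log (f (1 / 2)))
      ≤ 2 ^ (n + 2 - 1) * log 2 * (c * D / f (1 / 2)) := by grw [hr, hlog]
    _ = (2 ^ (n + 2 - 1) * c) * (log 2 * D / f (1 / 2)) := by ring
    _ = log 2 * D / f (1 / 2) := by rw [hc, one_mul]
    _ ≤ log 2 * (11 / 4 * (α - 1 / 2) ^ 2) / (99 / 100) := by gcongr
    _ < 2 * (α - 1 / 2) ^ 2 := by norm_num at hlog2; nlinarith

lemma gNAE_lt_gNAE_half {k : ℕ} {r α : ℝ} (hk : 74 ≤ k) (hr : r ≤ 2 ^ (k - 1) * log 2)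
    (hα : α ∈ Ioc (1 / 2 : ℝ) (9 / 10)) : gNAE k r α < gNAE k r (1 / 2) := by
  obtain ⟨hα₀, hα₁⟩ := hα
  have hf (y : ℝ) (h₀ : 0 ≤ y) (h₁ : y ≤ 1) : 0 < fPair k y := by
    linarith [le_fPair (k := k) (by omega) h₀ h₁]
  rw [gNAE_eq_exp (by linarith) (by linarith) (hf α (by linarith) (by linarith)),
    gNAE_eq_exp (by norm_num) (by norm_num) (hf _ (by norm_num) (by norm_num)), exp_lt_exp,
    show binEntropy (1 / 2) = log 2 by rw [one_div, binEntropy_two_inv]]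
  have := mul_log_fPair_sub_log_fPair_half_lt hk hr ⟨hα₀, hα₁⟩
  have := binEntropy_le_log_two_sub_two_mul_sq (p := α) (by linarith) (by linarith)
  linarith

lemma deriv_deriv_gNAE_half (n : ℕ) (r : ℝ) (hn : 7 ≤ n) :
    deriv (deriv (gNAE (n + 2) r)) (1 / 2) = gNAE (n + 2) r (1 / 2) *
      (r * (2 ^ (1 - ((n + 2 : ℕ) : ℤ)) * ((n + 2) * (n + 1) * (2 * (1 / 2) ^ n))) /
        fPair (n + 2) (1 / 2) - 4) := by
  set c : ℝ := 2 ^ (1 - ((n + 2 : ℕ) : ℤ))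
  set f := fPair (n + 2)
  set f' := fun y : ℝ ↦ c * ((↑(n + 1) + 1) * (y ^ (n + 1) - (1 - y) ^ (n + 1)))
  set L' := fun y ↦ r * (f' y / f y) + (log (1 - y) - log y)
  have hf (y : ℝ) (hy : y ∈ Icc (0 : ℝ) 1) : 99 / 100 ≤ f y := le_fPair (by omega) hy.1 hy.2
  have hf_half : 99 / 100 ≤ f (1 / 2) := hf _ (by norm_num)
  have hL : ∀ᶠ y in 𝓝 (1 / 2), HasDerivAt (fun y ↦ r * log (f y) + binEntropy y) (L' y) y := by
    filter_upwards [Ioo_mem_nhds (by norm_num : (0 : ℝ) < 1 / 2) (by norm_num : (1 / 2 : ℝ) < 1)]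
      with y hy
    have hfy : f y ≠ 0 := by linarith [hf y (Ioo_subset_Icc_self hy)]
    exact (((hasDerivAt_fPair (n + 1) y).log hfy).const_mul r).add
      (hasDerivAt_binEntropy hy.1.ne' (by linarith [hy.2]))
  have hf'_half : f' (1 / 2) = 0 := by norm_num [f']
  have hL'_half : L' (1 / 2) = 0 := by norm_num [L', hf'_half]
  have hL' : HasDerivAt L'
      (r * (c * ((n + 2) * (n + 1) * (2 * (1 / 2) ^ n))) / f (1 / 2) - 4) (1 / 2) := by
    have hf'' := ((hasDerivAt_pow_sub_sub_pow n 1 (1 / 2)).const_mul (↑(n + 1) + 1 : ℝ)).const_mul c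
    have := ((hf''.div (hasDerivAt_fPair (n + 1) (1 / 2)) (by linarith)).const_mul r).add
      (((hasDerivAt_id' (1 / 2 : ℝ)).const_sub 1).log (by norm_num) |>.sub
        (hasDerivAt_log (by norm_num)))
    refine this.congr_deriv ?_
    rw [show fPair (n + 1 + 1) = f from rfl, show (1 : ℝ) - 1 / 2 = 1 / 2 by norm_num]
    simp only [sub_self, mul_zero, sub_zero]
    field_simp
    push_cast
    ring
  have hg : gNAE (n + 2) r =ᶠ[𝓝 (1 / 2)] fun y ↦ exp (r * log (f y) + binEntropy y) := by
    filter_upwards [Ioo_mem_nhds (by norm_num : (0 : ℝ) < 1 / 2) (by norm_num : (1 / 2 : ℝ) < 1)]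
      with y hy
    exact gNAE_eq_exp hy.1 hy.2 (by linarith [hf y (Ioo_subset_Icc_self hy)])
  rw [hg.deriv.deriv_eq, deriv_deriv_exp_comp_of_deriv_eq_zero hL hL'_half hL', hg.eq_of_nhds]

lemma deriv_deriv_gNAE_half_neg {k : ℕ} {r : ℝ} (hk : 74 ≤ k) (hr : r ≤ 2 ^ (k - 1) * log 2) :
    deriv (deriv (gNAE k r)) (1 / 2) < 0 := by
  obtain ⟨n, rfl⟩ : ∃ n, k = n + 2 := ⟨k - 2, by omega⟩
  set c : ℝ := 2 ^ (1 - ((n + 2 : ℕ) : ℤ))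
  have hf : 99 / 100 ≤ fPair (n + 2) (1 / 2) := le_fPair (by omega) (by norm_num) (by norm_num)
  have hrc : r * c ≤ log 2 := by
    have hc := two_pow_sub_one_mul_two_zpow_one_sub (k := n + 2) (by omega)
    calc r * c ≤ 2 ^ (n + 2 - 1) * log 2 * c := by gcongr
      _ = log 2 := by rw [mul_right_comm, hc, one_mul]
  have hM : ((n : ℝ) + 2) * (n + 1) * (1 / 2) ^ n ≤ 11 / 4 :=
    le_trans (mul_le_mul_of_nonneg_left (pow_le_pow_left₀ (by norm_num) (by norm_num) n)
      (by positivity)) (mul_mul_nine_tenths_pow_le n (by omega))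
  have hr'' : r * (c * ((n + 2) * (n + 1) * (2 * (1 / 2) ^ n))) ≤ log 2 * (2 * (11 / 4)) := by
    calc r * (c * ((n + 2) * (n + 1) * (2 * (1 / 2) ^ n)))
        = (r * c) * (2 * (((n : ℝ) + 2) * (n + 1) * (1 / 2) ^ n)) := by ring
      _ ≤ log 2 * (2 * (11 / 4)) := by gcongr
  rw [deriv_deriv_gNAE_half n r (by omega)]
  refine mul_neg_of_pos_of_neg ?_ ?_
  · rw [gNAE_eq_exp (by norm_num) (by norm_num) (by linarith)]
    exact exp_pos _
  · rw [sub_neg, div_lt_iff₀ (by linarith)]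
    nlinarith [log_two_lt_d9]

theorem gNAE_near_half_general (k : ℕ) (hk : 74 ≤ k) (r : ℝ)
    (hr : r ≤ 2 ^ (k - 1) * Real.log 2) :
    (∀ α ∈ Set.Ioc (1 / 2 : ℝ) 0.9, gNAE k r α < gNAE k r (1 / 2)) ∧
    deriv (deriv (gNAE k r)) (1 / 2) < 0 :=
  ⟨fun α hα ↦ gNAE_lt_gNAE_half hk hr (by norm_num at hα ⊢; exact hα),
    deriv_deriv_gNAE_half_neg hk hr⟩

/-- **Lemma 5 (Achlioptas–Moore).** For all `k ≥ 74`, `0 < r ≤ 2^(k-1) ln 2`,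
and `α ∈ (1/2, 0.9]`: `g_r(α) < g_r(1/2)`; moreover `g_r''(1/2) < 0`. -/
theorem gNAE_near_half (k : ℕ) (hk : 74 ≤ k) (r : ℝ) (hr0 : 0 < r)
    (hr : r ≤ 2 ^ (k - 1) * Real.log 2) :
    (∀ α ∈ Set.Ioc (1 / 2 : ℝ) 0.9, gNAE k r α < gNAE k r (1 / 2)) ∧
    deriv (deriv (gNAE k r)) (1 / 2) < 0 :=
  gNAE_near_half_general k hk r hr
end

section
/- For every real x > 0: 1/ln(1+x) ≥ 1/x + 1/2 − x/12. -/
/-!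
The inequality follows from the `[2/1]` Padé bound `log (1 + x) ≤ x (6 + x) / (6 + 4 x)`:
its reciprocal `(6 + 4 x) / (x (6 + x))` exceeds `1/x + 1/2 - x/12` by `x² / (12 (6 + x))`.
The Padé bound holds because both sides vanish at `0` and the difference of their derivatives is
`x³ / ((2x + 3)² (1 + x)) ≥ 0`.
-/

open Set

namespace Real

lemma hasDerivAt_mul_six_add_div_six_add_four_mul {y : ℝ} (hy : 6 + 4 * y ≠ 0) :
    HasDerivAt (fun y : ℝ => y * (6 + y) / (6 + 4 * y))
      ((y ^ 2 + 3 * y + 9) / (2 * y + 3) ^ 2) y := by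
  have hnum := (hasDerivAt_id' y).mul ((hasDerivAt_id' y).const_add 6)
  have hden := ((hasDerivAt_id' y).const_mul 4).const_add 6
  refine (hnum.div hden hy).congr_deriv ?_
  have : 2 * y + 3 ≠ 0 := fun h => hy (by linear_combination 2 * h)
  rw [Pi.mul_apply, div_eq_div_iff (pow_ne_zero 2 hy) (pow_ne_zero 2 this)]
  ring

lemma log_one_add_le_mul_six_add_div_six_add_four_mul {x : ℝ} (hx : 0 ≤ x) :
    log (1 + x) ≤ x * (6 + x) / (6 + 4 * x) := by
  set f : ℝ → ℝ := fun y => y * (6 + y) / (6 + 4 * y) - log (1 + y)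
  have hf : ∀ y ∈ Ici (0 : ℝ), HasDerivAt f (y ^ 3 / ((2 * y + 3) ^ 2 * (1 + y))) y := by
    intro y (hy : 0 ≤ y)
    have hlog := ((hasDerivAt_id' y).const_add 1).log (by positivity)
    refine ((hasDerivAt_mul_six_add_div_six_add_four_mul (by positivity)).sub hlog).congr_deriv ?_
    field_simp
    ring
  have hmono : MonotoneOn f (Ici 0) := by
    refine monotoneOn_of_hasDerivWithinAt_nonneg (convex_Ici 0)
      (fun y hy => (hf y hy).continuousAt.continuousWithinAt)
      (fun y hy => (hf y (interior_subset hy)).hasDerivWithinAt) fun y hy => ?_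
    have hy : 0 ≤ y := interior_subset hy
    positivity
  simpa [f] using hmono self_mem_Ici hx hx

end Real

/-- For every `x > 0`: `1/ln(1+x) ≥ 1/x + 1/2 - x/12`. -/
theorem one_div_log_one_add_ge (x : ℝ) (hx : 0 < x) :
    1 / Real.log (1 + x) ≥ 1 / x + 1 / 2 - x / 12 := by
  have hlog : 0 < Real.log (1 + x) := Real.log_pos (by linarith)
  calc 1 / x + 1 / 2 - x / 12
      ≤ 1 / (x * (6 + x) / (6 + 4 * x)) := by
        rw [one_div_div, ← sub_nonneg]
        have : (6 + 4 * x) / (x * (6 + x)) - (1 / x + 1 / 2 - x / 12) = x ^ 2 / (12 * (6 + x)) := by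
          field_simp
          ring
        rw [this]
        positivity
    _ ≤ 1 / Real.log (1 + x) :=
        one_div_le_one_div_of_le hlog (Real.log_one_add_le_mul_six_add_div_six_add_four_mul hx.le)
end

section
/- Let n be a positive integer. (i) For every integer z with 0 < z ≤ n/2, writing α = z/n: binom(n,z) ≤ (1/√(2πn)) · (α(1−α))^{-1/2} · (α^{-α}·(1−α)^{-(1−α)})^n. (ii) For every integer z with 0 < z < n, writing α = z/n: binom(n,z) > (36/49) · (1/√(2πn)) · (α(1−α))^{-1/2} · (α^{-α}·(1−α)^{-(1−α)})^n. -/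
/-!
Write `k! = (σ k / √π) · √(2πk) (k/e)^k`, where `σ = Stirling.stirlingSeq` decreases from
`σ 1 = e/√2` to its limit `√π`. The right-hand side of the theorem (without the constant `36/49`)
is exactly `√(2πn)(n/e)^n / (√(2πz)(z/e)^z · √(2πm)(m/e)^m)` with `m = n - z`, so
`C(n, z) = √π σ(n) / (σ(z) σ(m))` times it. Monotonicity of `σ` and `√π ≤ σ` bound this factor
above by `1`, and below by `2π/e² ≈ 0.85 > 36/49`.
-/

open Real Stirling
open scoped Nat

namespace Stirling

noncomputable def stirlingApprox (k : ℕ) : ℝ :=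
  √(2 * π * k) * (k / exp 1) ^ k

noncomputable def binomStirlingApprox (n : ℕ) (α : ℝ) : ℝ :=
  1 / √(2 * π * n) * (1 / √(α * (1 - α))) * (α ^ (-α) * (1 - α) ^ (-(1 - α))) ^ n

lemma stirlingApprox_pos {k : ℕ} (hk : k ≠ 0) : 0 < stirlingApprox k := by
  unfold stirlingApprox
  positivity

lemma stirlingSeq_pos {k : ℕ} (hk : k ≠ 0) : 0 < stirlingSeq k :=
  (sqrt_pos.2 pi_pos).trans_le (sqrt_pi_le_stirlingSeq hk)

lemma stirlingSeq_le_of_le {j k : ℕ} (hj : j ≠ 0) (hjk : j ≤ k) :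
    stirlingSeq k ≤ stirlingSeq j := by
  obtain ⟨j, rfl⟩ := Nat.exists_eq_succ_of_ne_zero hj
  obtain ⟨k, rfl⟩ := Nat.exists_eq_succ_of_ne_zero (by omega : k ≠ 0)
  exact stirlingSeq'_antitone (Nat.succ_le_succ_iff.1 hjk)

lemma stirlingSeq_le_exp_one_div_sqrt_two {k : ℕ} (hk : k ≠ 0) :
    stirlingSeq k ≤ exp 1 / √2 :=
  stirlingSeq_one ▸ stirlingSeq_le_of_le one_ne_zero (Nat.one_le_iff_ne_zero.2 hk)

lemma factorial_eq_stirlingSeq_mul_stirlingApprox {k : ℕ} (hk : k ≠ 0) :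
    (k ! : ℝ) = stirlingSeq k / √π * stirlingApprox k := by
  have hA : stirlingApprox k = √π * (√(2 * k) * (k / exp 1) ^ k) := by
    simp only [stirlingApprox, sqrt_mul' _ (Nat.cast_nonneg k), mul_comm 2 π, sqrt_mul pi_pos.le]
    ring
  have : 0 < √(2 * k) * (k / exp 1) ^ k := by positivity
  rw [stirlingSeq, hA]
  field_simp

lemma div_rpow_neg_div_pow (k : ℕ) {n : ℕ} (hn : n ≠ 0) :
    (((k : ℝ) / n) ^ (-((k : ℝ) / n))) ^ n = ((n : ℝ) / k) ^ k := by
  rw [← rpow_natCast, ← rpow_mul (by positivity), neg_mul,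
    div_mul_cancel₀ _ (Nat.cast_ne_zero.2 hn), rpow_neg (by positivity), rpow_natCast, ← inv_pow,
    inv_div]

lemma binomStirlingApprox_eq {z m : ℕ} (hz : z ≠ 0) (hm : m ≠ 0) :
    binomStirlingApprox (z + m) ((z : ℝ) / (z + m : ℕ)) =
      stirlingApprox (z + m) / (stirlingApprox z * stirlingApprox m) := by
  have hn : z + m ≠ 0 := by omega
  have hn' : (0 : ℝ) < (z + m : ℕ) := by positivity
  have hcompl : 1 - (z : ℝ) / (z + m : ℕ) = m / (z + m : ℕ) := by
    field_simp
    push_cast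
    ring
  have hsqrt (k : ℕ) : √(2 * π * k) = √(2 * π) * √k := sqrt_mul (by positivity) _
  have hsqrt_var : √((z : ℝ) / (z + m : ℕ) * (m / (z + m : ℕ))) = √z * √m / (z + m : ℕ) := by
    rw [div_mul_div_comm (z : ℝ), sqrt_div' _ (by positivity), sqrt_mul (by positivity),
      sqrt_mul_self hn'.le]
  rw [binomStirlingApprox, hcompl, mul_pow, div_rpow_neg_div_pow _ hn, div_rpow_neg_div_pow _ hn,
    hsqrt_var]
  simp only [stirlingApprox, hsqrt, div_pow, pow_add]
  field_simp
  rw [sq_sqrt hn'.le]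

lemma binomStirlingApprox_pos {z m : ℕ} (hz : z ≠ 0) (hm : m ≠ 0) :
    0 < binomStirlingApprox (z + m) ((z : ℝ) / (z + m : ℕ)) := by
  rw [binomStirlingApprox_eq hz hm]
  exact div_pos (stirlingApprox_pos (by omega))
    (mul_pos (stirlingApprox_pos hz) (stirlingApprox_pos hm))

lemma add_choose_eq_mul_binomStirlingApprox {z m : ℕ} (hz : z ≠ 0) (hm : m ≠ 0) :
    ((z + m).choose z : ℝ) = √π * stirlingSeq (z + m) / (stirlingSeq z * stirlingSeq m) *
      binomStirlingApprox (z + m) ((z : ℝ) / (z + m : ℕ)) := by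
  have := stirlingSeq_pos hz
  have := stirlingSeq_pos hm
  rw [Nat.cast_add_choose, binomStirlingApprox_eq hz hm,
    factorial_eq_stirlingSeq_mul_stirlingApprox hz, factorial_eq_stirlingSeq_mul_stirlingApprox hm,
    factorial_eq_stirlingSeq_mul_stirlingApprox (by omega : z + m ≠ 0)]
  field_simp

lemma sqrt_pi_mul_stirlingSeq_div_le_one {j k l : ℕ} (hj : j ≠ 0) (hjk : j ≤ k) (hl : l ≠ 0) :
    √π * stirlingSeq k / (stirlingSeq j * stirlingSeq l) ≤ 1 := by
  rw [div_le_one (mul_pos (stirlingSeq_pos hj) (stirlingSeq_pos hl)), mul_comm]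
  exact mul_le_mul (stirlingSeq_le_of_le hj hjk) (sqrt_pi_le_stirlingSeq hl) (sqrt_nonneg π)
    (stirlingSeq_pos hj).le

lemma lt_sqrt_pi_mul_stirlingSeq_div {j k l : ℕ} (hj : j ≠ 0) (hk : k ≠ 0) (hl : l ≠ 0) :
    36 / 49 < √π * stirlingSeq k / (stirlingSeq j * stirlingSeq l) := by
  have hprod : stirlingSeq j * stirlingSeq l ≤ exp 1 ^ 2 / 2 := by
    calc stirlingSeq j * stirlingSeq l ≤ exp 1 / √2 * (exp 1 / √2) :=
          mul_le_mul (stirlingSeq_le_exp_one_div_sqrt_two hj)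
            (stirlingSeq_le_exp_one_div_sqrt_two hl) (stirlingSeq_pos hl).le (by positivity)
      _ = exp 1 ^ 2 / 2 := by rw [div_mul_div_comm, mul_self_sqrt zero_le_two, sq]
  have hconst : 36 / 49 < π / (exp 1 ^ 2 / 2) := by
    rw [lt_div_iff₀ (by positivity)]
    nlinarith [pi_gt_three, exp_one_lt_d9, exp_pos 1]
  calc (36 / 49 : ℝ) < π / (exp 1 ^ 2 / 2) := hconst
    _ = √π * √π / (exp 1 ^ 2 / 2) := by rw [mul_self_sqrt pi_pos.le]
    _ ≤ √π * stirlingSeq k / (stirlingSeq j * stirlingSeq l) := by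
      gcongr
      · exact mul_nonneg (sqrt_nonneg π) (stirlingSeq_pos hk).le
      · exact mul_pos (stirlingSeq_pos hj) (stirlingSeq_pos hl)
      · exact sqrt_pi_le_stirlingSeq hk

end Stirling

theorem binomial_stirling_bounds_general (n : ℕ) :
    (∀ z : ℕ, 0 < z → (z : ℝ) ≤ n / 2 → ∀ α : ℝ, α = (z : ℝ) / n →
      (n.choose z : ℝ) ≤ (1 / Real.sqrt (2 * Real.pi * n)) *
        (1 / Real.sqrt (α * (1 - α))) * (α ^ (-α) * (1 - α) ^ (-(1 - α))) ^ n) ∧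
    (∀ z : ℕ, 0 < z → z < n → ∀ α : ℝ, α = (z : ℝ) / n →
      (36 / 49 : ℝ) * ((1 / Real.sqrt (2 * Real.pi * n)) *
        (1 / Real.sqrt (α * (1 - α))) * (α ^ (-α) * (1 - α) ^ (-(1 - α))) ^ n)
          < (n.choose z : ℝ)) := by
  refine ⟨fun z hz hzn α hα => ?_, fun z hz hzn α hα => ?_⟩
  · have hz_lt : z < n := by
      have : (0 : ℝ) < z := Nat.cast_pos.2 hz
      exact_mod_cast (by linarith : (z : ℝ) < n)
    obtain ⟨m, rfl⟩ := Nat.exists_eq_add_of_le hz_lt.le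
    have hm : m ≠ 0 := by omega
    rw [hα, add_choose_eq_mul_binomStirlingApprox hz.ne' hm]
    exact mul_le_of_le_one_left (binomStirlingApprox_pos hz.ne' hm).le
      (sqrt_pi_mul_stirlingSeq_div_le_one hz.ne' (Nat.le_add_right z m) hm)
  · obtain ⟨m, rfl⟩ := Nat.exists_eq_add_of_le hzn.le
    have hm : m ≠ 0 := by omega
    rw [hα, add_choose_eq_mul_binomStirlingApprox hz.ne' hm]
    exact mul_lt_mul_of_pos_right (lt_sqrt_pi_mul_stirlingSeq_div hz.ne' (by omega) hm)
      (binomStirlingApprox_pos hz.ne' hm)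

/-- **Stirling-type bounds on binomial coefficients.** For `n > 0`:
(i) if `0 < z ≤ n/2` and `α = z/n`, then
`C(n,z) ≤ (2πn)^(-1/2) (α(1-α))^(-1/2) (α^(-α) (1-α)^(-(1-α)))^n`;
(ii) if `0 < z < n` and `α = z/n`, then
`C(n,z) > (36/49) (2πn)^(-1/2) (α(1-α))^(-1/2) (α^(-α) (1-α)^(-(1-α)))^n`. -/
theorem binomial_stirling_bounds (n : ℕ) (hn : 0 < n) :
    (∀ z : ℕ, 0 < z → (z : ℝ) ≤ n / 2 → ∀ α : ℝ, α = (z : ℝ) / n →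
      (n.choose z : ℝ) ≤ (1 / Real.sqrt (2 * Real.pi * n)) *
        (1 / Real.sqrt (α * (1 - α))) * (α ^ (-α) * (1 - α) ^ (-(1 - α))) ^ n) ∧
    (∀ z : ℕ, 0 < z → z < n → ∀ α : ℝ, α = (z : ℝ) / n →
      (36 / 49 : ℝ) * ((1 / Real.sqrt (2 * Real.pi * n)) *
        (1 / Real.sqrt (α * (1 - α))) * (α ^ (-α) * (1 - α) ^ (-(1 - α))) ^ n)
          < (n.choose z : ℝ)) :=
  binomial_stirling_bounds_general n
end
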